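/- Let G and H be graphs and let v be a vertex of G with deg_G(v) ≤ 2(δ(H) − 1), where δ(H) is the minimum degree of H. If Breaker has a winning strategy in the H-game on G − v (Maker moving first), then Breaker has a winning strategy in the H-game on G (Maker moving first). -/

import Mathlib

open scoped Classical

noncomputable section

namespace HGamePaper

/-! ### Maker-Breaker games -/

variable {X : Type*} {α β : Type*}

/-- Auxiliary game predicate: from a position (remaining unclaimed elements `rem`,
the set `claimed` of elements claimed so far by Maker, and a flag `makerTurn`
telling whose move it is), Maker has a strategy to end the game having claimed
all elements of some winning set of `W`.  The fuel is the number of moves left. -/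
def MakerWinsAux [DecidableEq X] (W : Set (Finset X)) :
    ℕ → Finset X → Finset X → Bool → Prop
  | 0, _, claimed, _ => ∃ A ∈ W, A ⊆ claimed
  | (k + 1), rem, claimed, makerTurn =>
      if rem = ∅ then ∃ A ∈ W, A ⊆ claimed
      else if makerTurn then
        ∃ x ∈ rem, MakerWinsAux W k (rem.erase x) (insert x claimed) false
      else
        ∀ x ∈ rem, MakerWinsAux W k (rem.erase x) claimed true

/-- Dual predicate: Breaker has a strategy guaranteeing that at the end of the game
Maker has not claimed all elements of any winning set. -/
def BreakerWinsAux [DecidableEq X] (W : Set (Finset X)) :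
    ℕ → Finset X → Finset X → Bool → Prop
  | 0, _, claimed, _ => ¬ ∃ A ∈ W, A ⊆ claimed
  | (k + 1), rem, claimed, makerTurn =>
      if rem = ∅ then ¬ ∃ A ∈ W, A ⊆ claimed
      else if makerTurn then
        ∀ x ∈ rem, BreakerWinsAux W k (rem.erase x) (insert x claimed) false
      else
        ∃ x ∈ rem, BreakerWinsAux W k (rem.erase x) claimed true

/-- Maker has a winning strategy in the Maker-Breaker game on the board `board`
with winning sets `W`; `makerStarts` records whether Maker makes the first move. -/
def MakerWins [DecidableEq X] (board : Finset X) (W : Set (Finset X))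
    (makerStarts : Bool) : Prop :=
  MakerWinsAux W board.card board ∅ makerStarts

/-- Breaker has a winning strategy in the Maker-Breaker game on the board `board`
with winning sets `W`; `makerStarts` records whether Maker makes the first move. -/
def BreakerWins [DecidableEq X] (board : Finset X) (W : Set (Finset X))
    (makerStarts : Bool) : Prop :=
  BreakerWinsAux W board.card board ∅ makerStarts

/-! ### Copies of a graph and the `H`-game -/

/-- `A` is the edge set of a copy of `H` in `G` (a subgraph of `G` isomorphic to `H`). -/
def IsCopy (H : SimpleGraph β) (G : SimpleGraph α) (A : Set (Sym2 α)) : Prop :=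
  ∃ f : β ↪ α, (∀ u v, H.Adj u v → G.Adj (f u) (f v)) ∧ A = Sym2.map f '' H.edgeSet

/-- The winning sets of the `H`-game: edge sets of copies of `H` in `G`. -/
def copyFinsets (H : SimpleGraph β) (G : SimpleGraph α) : Set (Finset (Sym2 α)) :=
  {A : Finset (Sym2 α) | IsCopy H G ↑A}

/-- Maker (moving first) has a winning strategy in the `H`-game played on the
edge set of `G`. -/
def MakerWinsHGame [Fintype α] (H : SimpleGraph β) (G : SimpleGraph α) : Prop :=
  MakerWins G.edgeSet.toFinset (copyFinsets H G) true

/-- Breaker has a winning strategy in the `H`-game played on the edge set of `G`,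
with Maker moving first. -/
def BreakerWinsHGame [Fintype α] (H : SimpleGraph β) (G : SimpleGraph α) : Prop :=
  BreakerWins G.edgeSet.toFinset (copyFinsets H G) true

/-! ### Densities -/

/-- The number of edges of a graph. -/
def numEdges (G : SimpleGraph α) : ℕ := G.edgeSet.ncard

/-- `d₂(G) = (e_G - 1)/(v_G - 2)`. -/
def d2 (G : SimpleGraph α) : ℝ :=
  ((numEdges G : ℝ) - 1) / ((Nat.card α : ℝ) - 2)

/-- `d₂` of a subgraph. -/
def subD2 {G : SimpleGraph α} (J : G.Subgraph) : ℝ :=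
  ((J.edgeSet.ncard : ℝ) - 1) / ((J.verts.ncard : ℝ) - 2)

/-- The 2-density `m₂(G) = max { d₂(J) : J ⊆ G, v_J ≥ 3 }`. -/
def m2 (G : SimpleGraph α) : ℝ :=
  sSup {x : ℝ | ∃ J : G.Subgraph, 3 ≤ J.verts.ncard ∧ x = subD2 J}

/-- `G` is strictly 2-balanced. -/
def IsStrictlyTwoBalanced (G : SimpleGraph α) : Prop :=
  m2 G = d2 G ∧ ∀ J : G.Subgraph, J ≠ ⊤ → 3 ≤ J.verts.ncard → subD2 J < m2 G

/-- `m(G) = max { e_{G'}/v_{G'} : G' ⊆ G, v_{G'} ≥ 1 }`. -/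
def mDensity (G : SimpleGraph α) : ℝ :=
  sSup {x : ℝ | ∃ J : G.Subgraph, 1 ≤ J.verts.ncard ∧
    x = (J.edgeSet.ncard : ℝ) / (J.verts.ncard : ℝ)}

/-- `ar(G) = max { e_{G'}/(v_{G'} - 1) : G' ⊆ G, v_{G'} ≥ 2 }`. -/
def arDensity (G : SimpleGraph α) : ℝ :=
  sSup {x : ℝ | ∃ J : G.Subgraph, 2 ≤ J.verts.ncard ∧
    x = (J.edgeSet.ncard : ℝ) / ((J.verts.ncard : ℝ) - 1)}

/-- `G` is a triangle, i.e. isomorphic to `K₃`. -/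
def IsTriangle (G : SimpleGraph α) : Prop :=
  Nonempty (G ≃g (⊤ : SimpleGraph (Fin 3)))

/-- The hypothesis of the main theorem: there is a subgraph `H' ⊆ H` with
`d₂(H') = m₂(H)` which is strictly 2-balanced and is neither a tree nor a triangle. -/
def GoodGraph (H : SimpleGraph β) : Prop :=
  ∃ H' : H.Subgraph, d2 H'.coe = m2 H ∧ IsStrictlyTwoBalanced H'.coe ∧
    ¬ H'.coe.IsTree ∧ ¬ IsTriangle H'.coe

/-! ### The random graph `G(n,p)` -/

/-- The probability that the binomial random graph `G(n,p)` satisfies the property `P`. -/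
def gnpProb (n : ℕ) (p : ℝ) (P : SimpleGraph (Fin n) → Prop) : ℝ :=
  ∑ G : SimpleGraph (Fin n),
    if P G then p ^ numEdges G * (1 - p) ^ (n.choose 2 - numEdges G) else 0

/-! ### The graph `H_P` -/

/-- The graph `H_P`: the disjoint union of `H` and a triangle, together with a path of
length 3 (two new internal vertices) joining a triangle vertex to the vertex `v₀` of `H`. -/
def HP (H : SimpleGraph β) (v₀ : β) : SimpleGraph (β ⊕ Fin 5) :=
  SimpleGraph.fromEdgeSet
    ((Sym2.map Sum.inl '' H.edgeSet) ∪
      {s(Sum.inr 0, Sum.inr 1), s(Sum.inr 0, Sum.inr 2), s(Sum.inr 1, Sum.inr 2),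
       s(Sum.inr 0, Sum.inr 3), s(Sum.inr 3, Sum.inr 4), s(Sum.inr 4, Sum.inl v₀)})

/-! ### `H`-cores and `H`-closed subgraphs -/

/-- An edge of `G` is open if it lies in exactly one copy of `H` in `G`. -/
def OpenEdge (H : SimpleGraph β) (G : SimpleGraph α) (e : Sym2 α) : Prop :=
  ∃! A : Set (Sym2 α), IsCopy H G A ∧ e ∈ A

/-- A copy of `H` in `G` (given by its edge set `A`) is unproblematic if it contains
at least two open edges. -/
def Unproblematic (H : SimpleGraph β) (G : SimpleGraph α) (A : Set (Sym2 α)) : Prop :=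
  ∃ e₁ ∈ A, ∃ e₂ ∈ A, e₁ ≠ e₂ ∧ OpenEdge H G e₁ ∧ OpenEdge H G e₂

/-- The defining properties of an `H`-core: every edge lies in a copy of `H`, and
every copy of `H` is problematic. -/
def CoreProps (H : SimpleGraph β) (G' : SimpleGraph α) : Prop :=
  (∀ e ∈ G'.edgeSet, ∃ A, IsCopy H G' A ∧ e ∈ A) ∧
    ∀ A, IsCopy H G' A → ¬ Unproblematic H G' A

/-- `G'` is an `H`-core of `G`: a maximal subgraph of `G` satisfying `CoreProps`. -/
def IsHCore (H : SimpleGraph β) (G G' : SimpleGraph α) : Prop :=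
  G' ≤ G ∧ CoreProps H G' ∧ ∀ G'' : SimpleGraph α, G'' ≤ G → G' ≤ G'' →
    CoreProps H G'' → G'' = G'

/-- `G''` is an `H`-closed subgraph of `core`: every copy of `H` in `core` is either
contained in `G''` or edge-disjoint from it. -/
def IsHClosed (H : SimpleGraph β) (core G'' : SimpleGraph α) : Prop :=
  G'' ≤ core ∧ ∀ A, IsCopy H core A → A ⊆ G''.edgeSet ∨ Disjoint A G''.edgeSet

/-- `G''` is a minimal (nonempty) `H`-closed subgraph of `core`. -/
def IsMinHClosed (H : SimpleGraph β) (core G'' : SimpleGraph α) : Prop :=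
  IsHClosed H core G'' ∧ G''.edgeSet.Nonempty ∧
    ∀ G''' : SimpleGraph α, IsHClosed H core G''' → G'''.edgeSet.Nonempty →
      G''' ≤ G'' → G''' = G''

section Games
variable {X : Type*} [DecidableEq X] (W : Set (Finset X))

lemma noWinNow :
    ∀ (k : ℕ) (rem claimed : Finset X) (b : Bool),
      BreakerWinsAux W k rem claimed b → ¬ ∃ A ∈ W, A ⊆ claimed := by
  intro k
  induction k with
  | zero => intro rem claimed b h; exact h
  | succ k ih =>
    intro rem claimed b h
    rw [BreakerWinsAux] at h
    by_cases hr : rem = ∅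
    · simpa [hr] using h
    · rw [if_neg hr] at h
      cases b with
      | false =>
        simp only [if_neg (Bool.false_ne_true)] at h
        obtain ⟨x, hx, hx2⟩ := h
        exact ih _ _ _ hx2
      | true =>
        simp only [if_pos rfl] at h
        obtain ⟨x, hx⟩ := Finset.nonempty_iff_ne_empty.2 hr
        have h2 := ih _ _ _ (h x hx)
        intro hA; obtain ⟨A, hAW, hAc⟩ := hA
        exact h2 ⟨A, hAW, hAc.trans (Finset.subset_insert _ _)⟩

end Games

lemma freeMoves [DecidableEq X] {W : Set (Finset X)} :
    ∀ (k : ℕ) (rem rem' claimed : Finset X) (b : Bool), rem' ⊆ rem → rem.card = k →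
      BreakerWinsAux W k rem claimed b →
      BreakerWinsAux W rem'.card rem' claimed b := by
  intro k
  induction k with
  | zero =>
    intro rem rem' claimed b hsub hcard h
    have h1 : rem = ∅ := Finset.card_eq_zero.mp hcard
    have h2 : rem' = ∅ := Finset.subset_empty.mp (h1 ▸ hsub)
    subst h2
    simpa [BreakerWinsAux] using h
  | succ k ih =>
    intro rem rem' claimed b hsub hcard h
    by_cases hr' : rem' = ∅
    · subst hr'
      simpa [BreakerWinsAux] using noWinNow W _ _ _ _ h
    · have hrne : rem ≠ ∅ := fun h0 => hr' (Finset.subset_empty.mp (h0 ▸ hsub))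
      rw [BreakerWinsAux, if_neg hrne] at h
      obtain ⟨j, hj⟩ : ∃ j, rem'.card = j + 1 :=
        ⟨rem'.card - 1, (Nat.succ_pred_eq_of_pos (Finset.card_pos.mpr
          (Finset.nonempty_iff_ne_empty.mpr hr'))).symm⟩
      rw [hj, BreakerWinsAux, if_neg hr']
      have hje : ∀ x ∈ rem', (rem'.erase x).card = j := fun x hx => by
        rw [Finset.card_erase_of_mem hx, hj]; omega
      have hke : ∀ x ∈ rem, (rem.erase x).card = k := fun x hx => by
        rw [Finset.card_erase_of_mem hx, hcard]; omega
      cases b with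
      | true =>
        simp only [if_pos rfl] at h ⊢
        intro x hx
        rw [← hje x hx]
        exact ih _ _ _ _ (Finset.erase_subset_erase _ hsub) (hke x (hsub hx)) (h x (hsub hx))
      | false =>
        simp only [if_neg (Bool.false_ne_true)] at h ⊢
        obtain ⟨y, hy, hwy⟩ := h
        by_cases hy' : y ∈ rem'
        · refine ⟨y, hy', ?_⟩
          rw [← hje y hy']
          exact ih _ _ _ _ (Finset.erase_subset_erase _ hsub) (hke y hy) hwy
        · obtain ⟨z, hz⟩ := Finset.nonempty_iff_ne_empty.mpr hr'
          refine ⟨z, hz, ?_⟩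
          rw [← hje z hz]
          have hsub2 : rem'.erase z ⊆ rem.erase y := by
            intro a ha
            have ha' := Finset.mem_of_mem_erase ha
            exact Finset.mem_erase.mpr ⟨fun h0 => hy' (h0 ▸ ha'), hsub ha'⟩
          exact ih _ _ _ _ hsub2 (hke y hy) hwy

lemma relabelGame [DecidableEq X] {W : Set (Finset X)} {Y : Type*} [DecidableEq Y] (g : X → Y) (hg : Function.Injective g)
    (W' : Set (Finset Y)) (hW' : ∀ B ∈ W', ∃ A ∈ W, B = A.image g) :
    ∀ (k : ℕ) (rem claimed : Finset X) (b : Bool), BreakerWinsAux W k rem claimed b →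
      BreakerWinsAux W' k (rem.image g) (claimed.image g) b := by
  have hend : ∀ claimed : Finset X, (¬ ∃ A ∈ W, A ⊆ claimed) →
      ¬ ∃ B ∈ W', B ⊆ claimed.image g := by
    intro claimed h hB
    obtain ⟨B, hBW, hBsub⟩ := hB
    obtain ⟨A, hAW, rfl⟩ := hW' B hBW
    exact h ⟨A, hAW, (Finset.image_subset_image_iff hg).mp hBsub⟩
  intro k
  induction k with
  | zero => intro rem claimed b h; exact hend claimed h
  | succ k ih =>
    intro rem claimed b h
    rw [BreakerWinsAux] at h
    rw [BreakerWinsAux]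
    by_cases hr : rem = ∅
    · rw [if_pos hr] at h
      rw [if_pos (by simp [hr])]
      exact hend claimed h
    · rw [if_neg hr] at h
      rw [if_neg (by simp [Finset.image_eq_empty, hr])]
      cases b with
      | true =>
        simp only [if_pos rfl] at h ⊢
        intro y hy
        obtain ⟨x, hx, rfl⟩ := Finset.mem_image.mp hy
        rw [← Finset.image_erase hg, ← Finset.image_insert]
        exact ih _ _ _ (h x hx)
      | false =>
        simp only [if_neg (Bool.false_ne_true)] at h ⊢
        obtain ⟨x, hx, hw⟩ := h
        refine ⟨g x, Finset.mem_image_of_mem g hx, ?_⟩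
        rw [← Finset.image_erase hg]
        exact ih _ _ _ hw

lemma simGame [DecidableEq X] {W : Set (Finset X)} (s t : Finset X) (hst : Disjoint s t) (δ : ℕ)
    (ht : t.card + 2 ≤ 2 * δ)
    (hW : ∀ A ∈ W, A ⊆ s ∪ t ∧ (A ∩ t = ∅ ∨ δ ≤ (A ∩ t).card)) :
    ∀ (n : ℕ) (rem claimed : Finset X), rem.card = n → rem ⊆ s ∪ t →
      Disjoint rem claimed →
      BreakerWinsAux {A | A ∈ W ∧ A ∩ t = ∅} ((rem ∩ s).card) (rem ∩ s) (claimed ∩ s) true →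
      (claimed ∩ t).card < δ →
      ((rem ∩ t).Nonempty → (claimed ∩ t).card ≤ ((t \ rem) \ claimed).card) →
      BreakerWinsAux W rem.card rem claimed true := by
  classical
  set W' : Set (Finset X) := {A | A ∈ W ∧ A ∩ t = ∅} with hW'def
  -- end-condition helper
  have hendAll : ∀ C : Finset X, (¬ ∃ A ∈ W', A ⊆ C ∩ s) → (C ∩ t).card < δ →
      ¬ ∃ A ∈ W, A ⊆ C := by
    intro C hs' hm' hA
    obtain ⟨A, hAW, hAC⟩ := hA
    obtain ⟨hAsub, hAt⟩ := hW A hAW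
    rcases hAt with h0 | hδ
    · refine hs' ⟨A, ⟨hAW, h0⟩, ?_⟩
      intro a ha
      refine Finset.mem_inter.mpr ⟨hAC ha, ?_⟩
      rcases Finset.mem_union.mp (hAsub ha) with h | h
      · exact h
      · exact absurd (Finset.mem_inter.mpr ⟨ha, h⟩) (by simp [h0])
    · have h1 : A ∩ t ⊆ C ∩ t := Finset.inter_subset_inter hAC le_rfl
      have := Finset.card_le_card h1
      omega
  intro n
  induction n using Nat.strong_induction_on with
  | _ n ihn =>
    intro rem claimed hn hrsub hdisj hvirt hm hmb
    by_cases hr : rem = ∅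
    · rw [hr]
      simp only [Finset.card_empty]
      rw [BreakerWinsAux]
      exact hendAll claimed (noWinNow _ _ _ _ _ hvirt) hm
    · obtain ⟨k, hk⟩ : ∃ k, rem.card = k + 1 :=
        ⟨rem.card - 1, (Nat.succ_pred_eq_of_pos (Finset.card_pos.mpr
          (Finset.nonempty_iff_ne_empty.mpr hr))).symm⟩
      rw [hk, BreakerWinsAux, if_neg hr, if_pos rfl]
      intro x hx
      have hxst := hrsub hx
      have hxnc : x ∉ claimed := Finset.disjoint_left.mp hdisj hx
      have hkx : (rem.erase x).card = k := by
        rw [Finset.card_erase_of_mem hx]; omega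
      by_cases hxs : x ∈ s
      · -- ======== Maker moved in s ========
        have hxt : x ∉ t := Finset.disjoint_left.mp hst hxs
        have hxrs : x ∈ rem ∩ s := Finset.mem_inter.mpr ⟨hx, hxs⟩
        have hrsne : rem ∩ s ≠ ∅ := Finset.nonempty_iff_ne_empty.mp ⟨x, hxrs⟩
        obtain ⟨j, hj⟩ : ∃ j, (rem ∩ s).card = j + 1 :=
          ⟨(rem ∩ s).card - 1, (Nat.succ_pred_eq_of_pos
            (Finset.card_pos.mpr ⟨x, hxrs⟩)).symm⟩
        rw [hj, BreakerWinsAux, if_neg hrsne, if_pos rfl] at hvirt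
        have hvx := hvirt x hxrs
        have hjx : ((rem ∩ s).erase x).card = j := by
          rw [Finset.card_erase_of_mem hxrs]; omega
        have hclins : (insert x claimed) ∩ s = insert x (claimed ∩ s) := by
          ext a
          simp only [Finset.mem_inter, Finset.mem_insert]
          constructor
          · rintro ⟨h1 | h1, h2⟩
            · exact Or.inl h1
            · exact Or.inr ⟨h1, h2⟩
          · rintro (rfl | ⟨h1, h2⟩)
            · exact ⟨Or.inl rfl, hxs⟩
            · exact ⟨Or.inr h1, h2⟩
        have hclint : (insert x claimed) ∩ t = claimed ∩ t := by
          ext a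
          simp only [Finset.mem_inter, Finset.mem_insert]
          constructor
          · rintro ⟨rfl | h1, h2⟩
            · exact absurd h2 hxt
            · exact ⟨h1, h2⟩
          · rintro ⟨h1, h2⟩; exact ⟨Or.inr h1, h2⟩
        have hnowin : ¬ ∃ A ∈ W', A ⊆ (insert x claimed) ∩ s := by
          rw [hclins]; exact noWinNow _ _ _ _ _ hvx
        by_cases hre : rem.erase x = ∅
        · -- game over after Maker's move
          have hk0 : k = 0 := by rw [← hkx, hre, Finset.card_empty]
          rw [hk0, BreakerWinsAux]
          exact hendAll _ hnowin (by rw [hclint]; exact hm)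
        · obtain ⟨k', hk'⟩ : ∃ k', k = k' + 1 :=
            ⟨k - 1, by
              have : 0 < (rem.erase x).card := Finset.card_pos.mpr
                (Finset.nonempty_iff_ne_empty.mpr hre)
              omega⟩
          rw [hk', BreakerWinsAux, if_neg hre, if_neg (Bool.false_ne_true)]
          by_cases hrse : (rem ∩ s).erase x = ∅
          · -- no s-moves left in virtual game; Breaker plays the remaining t-element
            obtain ⟨y, hy⟩ := Finset.nonempty_iff_ne_empty.mpr hre
            have hyr : y ∈ rem := Finset.mem_of_mem_erase hy
            have hyx : y ≠ x := Finset.ne_of_mem_erase hy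
            have hyt : y ∈ t := by
              rcases Finset.mem_union.mp (hrsub hyr) with h | h
              · exact absurd (Finset.mem_erase.mpr ⟨hyx, Finset.mem_inter.mpr ⟨hyr, h⟩⟩)
                  (by rw [hrse]; exact Finset.notMem_empty y)
              · exact h
            have hync : y ∉ claimed := Finset.disjoint_left.mp hdisj hyr
            refine ⟨y, hy, ?_⟩
            set rem' := (rem.erase x).erase y with hrem'
            have hrem's : rem' ∩ s = ∅ := by
              rw [hrem', Finset.erase_inter, Finset.erase_inter, hrse, Finset.erase_empty]
            have hc' : rem'.card = k' := by
              rw [hrem', Finset.card_erase_of_mem hy, hkx]; omega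
            rw [← hc']
            refine ihn rem'.card (by omega) rem' (insert x claimed) rfl
              (fun a ha => hrsub (Finset.mem_of_mem_erase (Finset.mem_of_mem_erase ha)))
              ?_ ?_ ?_ ?_
            · refine Finset.disjoint_left.mpr fun a ha hac => ?_
              rcases Finset.mem_insert.mp hac with rfl | h
              · exact Finset.ne_of_mem_erase (Finset.mem_of_mem_erase ha) rfl
              · exact Finset.disjoint_left.mp hdisj
                  (Finset.mem_of_mem_erase (Finset.mem_of_mem_erase ha)) h
            · -- virtual game: board empty, end condition holds
              rw [hrem's, hclins]
              simp only [Finset.card_empty]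
              rw [BreakerWinsAux]
              exact noWinNow _ _ _ _ _ hvx
            · rw [hclint]; exact hm
            · -- counting invariant
              intro _
              rw [hclint]
              have hb : (claimed ∩ t).card ≤ ((t \ rem) \ claimed).card :=
                hmb ⟨y, Finset.mem_inter.mpr ⟨hyr, hyt⟩⟩
              refine hb.trans (Finset.card_le_card ?_)
              intro a ha
              have h1 := Finset.mem_sdiff.mp ha
              have h2 := Finset.mem_sdiff.mp h1.1
              refine Finset.mem_sdiff.mpr ⟨Finset.mem_sdiff.mpr ⟨h2.1, fun har =>
                h2.2 (Finset.mem_of_mem_erase (Finset.mem_of_mem_erase har))⟩, ?_⟩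
              intro hac
              rcases Finset.mem_insert.mp hac with rfl | h
              · exact hxt h2.1
              · exact h1.2 h
          · -- virtual Breaker has a reply in s
            obtain ⟨j', hj'⟩ : ∃ j', j = j' + 1 :=
              ⟨j - 1, by
                have : 0 < ((rem ∩ s).erase x).card := Finset.card_pos.mpr
                  (Finset.nonempty_iff_ne_empty.mpr hrse)
                omega⟩
            rw [hj', BreakerWinsAux, if_neg hrse, if_neg (Bool.false_ne_true)] at hvx
            obtain ⟨y, hy, hvy⟩ := hvx
            have hys : y ∈ s := (Finset.mem_inter.mp (Finset.mem_of_mem_erase hy)).2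
            have hyr : y ∈ rem := (Finset.mem_inter.mp (Finset.mem_of_mem_erase hy)).1
            have hyx : y ≠ x := Finset.ne_of_mem_erase hy
            have hyt : y ∉ t := Finset.disjoint_left.mp hst hys
            refine ⟨y, Finset.mem_erase.mpr ⟨hyx, hyr⟩, ?_⟩
            set rem' := (rem.erase x).erase y with hrem'
            have hc' : rem'.card = k' := by
              rw [hrem', Finset.card_erase_of_mem (Finset.mem_erase.mpr ⟨hyx, hyr⟩), hkx]
              omega
            have hrem's : rem' ∩ s = ((rem ∩ s).erase x).erase y := by
              rw [hrem', Finset.erase_inter, Finset.erase_inter]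
            have hrem't : rem' ∩ t = rem ∩ t := by
              rw [hrem', Finset.erase_inter, Finset.erase_inter,
                Finset.erase_eq_of_notMem (fun h => hyt (Finset.mem_inter.mp
                  (Finset.mem_of_mem_erase h)).2),
                Finset.erase_eq_of_notMem (fun h => hxt (Finset.mem_inter.mp h).2)]
            have hj'c : (((rem ∩ s).erase x).erase y).card = j' := by
              rw [Finset.card_erase_of_mem hy, hjx]; omega
            rw [← hc']
            refine ihn rem'.card (by omega) rem' (insert x claimed) rfl
              (fun a ha => hrsub (Finset.mem_of_mem_erase (Finset.mem_of_mem_erase ha)))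
              ?_ ?_ ?_ ?_
            · refine Finset.disjoint_left.mpr fun a ha hac => ?_
              rcases Finset.mem_insert.mp hac with rfl | h
              · exact Finset.ne_of_mem_erase (Finset.mem_of_mem_erase ha) rfl
              · exact Finset.disjoint_left.mp hdisj
                  (Finset.mem_of_mem_erase (Finset.mem_of_mem_erase ha)) h
            · rw [hrem's, hclins, hj'c]
              exact hvy
            · rw [hclint]; exact hm
            · intro hne
              rw [hclint]
              rw [hrem't] at hne
              have hb := hmb hne
              refine hb.trans (Finset.card_le_card ?_)
              intro a ha
              have h1 := Finset.mem_sdiff.mp ha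
              have h2 := Finset.mem_sdiff.mp h1.1
              refine Finset.mem_sdiff.mpr ⟨Finset.mem_sdiff.mpr ⟨h2.1, fun har =>
                h2.2 (Finset.mem_of_mem_erase (Finset.mem_of_mem_erase har))⟩, ?_⟩
              intro hac
              rcases Finset.mem_insert.mp hac with rfl | h
              · exact hxt h2.1
              · exact h1.2 h
      · -- ======== Maker moved in t ========
        have hxt : x ∈ t := by
          rcases Finset.mem_union.mp hxst with h | h
          · exact absurd h hxs
          · exact h
        have hb0 : (claimed ∩ t).card ≤ ((t \ rem) \ claimed).card :=
          hmb ⟨x, Finset.mem_inter.mpr ⟨hx, hxt⟩⟩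
        have hclins : (insert x claimed) ∩ s = claimed ∩ s := by
          ext a
          simp only [Finset.mem_inter, Finset.mem_insert]
          constructor
          · rintro ⟨rfl | h1, h2⟩
            · exact absurd h2 hxs
            · exact ⟨h1, h2⟩
          · rintro ⟨h1, h2⟩; exact ⟨Or.inr h1, h2⟩
        have hclint : (insert x claimed) ∩ t = insert x (claimed ∩ t) := by
          ext a
          simp only [Finset.mem_inter, Finset.mem_insert]
          constructor
          · rintro ⟨h1 | h1, h2⟩
            · exact Or.inl h1
            · exact Or.inr ⟨h1, h2⟩
          · rintro (rfl | ⟨h1, h2⟩)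
            · exact ⟨Or.inl rfl, hxt⟩
            · exact ⟨Or.inr h1, h2⟩
        have hxnct : x ∉ claimed ∩ t := fun h => hxnc (Finset.mem_inter.mp h).1
        have hmcard : ((insert x claimed) ∩ t).card = (claimed ∩ t).card + 1 := by
          rw [hclint, Finset.card_insert_of_notMem hxnct]
        -- the union bound giving (claimed' ∩ t).card < δ
        have hdisj2 : Disjoint (insert x (claimed ∩ t)) ((t \ rem) \ claimed) := by
          refine Finset.disjoint_left.mpr fun a ha hb => ?_
          have h1 := Finset.mem_sdiff.mp hb
          rcases Finset.mem_insert.mp ha with rfl | h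
          · exact (Finset.mem_sdiff.mp h1.1).2 hx
          · exact h1.2 (Finset.mem_inter.mp h).1
        have hsum : (insert x (claimed ∩ t)).card + ((t \ rem) \ claimed).card ≤ t.card := by
          rw [← Finset.card_union_of_disjoint hdisj2]
          refine Finset.card_le_card fun a ha => ?_
          rcases Finset.mem_union.mp ha with h | h
          · rcases Finset.mem_insert.mp h with rfl | h
            · exact hxt
            · exact (Finset.mem_inter.mp h).2
          · exact (Finset.mem_sdiff.mp (Finset.mem_sdiff.mp h).1).1
        have hcins : (insert x (claimed ∩ t)).card = (claimed ∩ t).card + 1 :=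
          Finset.card_insert_of_notMem hxnct
        have hmlt : ((insert x claimed) ∩ t).card < δ := by
          rw [hmcard]; omega
        by_cases hre : rem.erase x = ∅
        · -- game over after Maker's move
          have hk0 : k = 0 := by rw [← hkx, hre, Finset.card_empty]
          rw [hk0, BreakerWinsAux]
          refine hendAll _ ?_ hmlt
          rw [hclins]
          exact noWinNow _ _ _ _ _ hvirt
        · obtain ⟨k', hk'⟩ : ∃ k', k = k' + 1 :=
            ⟨k - 1, by
              have : 0 < (rem.erase x).card := Finset.card_pos.mpr
                (Finset.nonempty_iff_ne_empty.mpr hre)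
              omega⟩
          rw [hk', BreakerWinsAux, if_neg hre, if_neg (Bool.false_ne_true)]
          by_cases hret : (rem.erase x) ∩ t = ∅
          · -- no pairing partner left; Breaker plays in s
            obtain ⟨y, hy⟩ := Finset.nonempty_iff_ne_empty.mpr hre
            have hyr : y ∈ rem := Finset.mem_of_mem_erase hy
            have hyx : y ≠ x := Finset.ne_of_mem_erase hy
            have hys : y ∈ s := by
              rcases Finset.mem_union.mp (hrsub hyr) with h | h
              · exact h
              · exact absurd (Finset.mem_inter.mpr ⟨hy, h⟩)
                  (by rw [hret]; exact Finset.notMem_empty y)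
            refine ⟨y, hy, ?_⟩
            set rem' := (rem.erase x).erase y with hrem'
            have hc' : rem'.card = k' := by
              rw [hrem', Finset.card_erase_of_mem hy, hkx]; omega
            have hxnrs : x ∉ rem ∩ s := fun h => hxs (Finset.mem_inter.mp h).2
            have hrem's : rem' ∩ s = (rem ∩ s).erase y := by
              rw [hrem', Finset.erase_inter, Finset.erase_inter,
                Finset.erase_eq_of_notMem hxnrs]
            have hrem't : rem' ∩ t = ∅ := by
              rw [hrem', Finset.erase_inter, hret, Finset.erase_empty]
            rw [← hc']
            refine ihn rem'.card (by omega) rem' (insert x claimed) rfl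
              (fun a ha => hrsub (Finset.mem_of_mem_erase (Finset.mem_of_mem_erase ha)))
              ?_ ?_ ?_ ?_
            · refine Finset.disjoint_left.mpr fun a ha hac => ?_
              rcases Finset.mem_insert.mp hac with rfl | h
              · exact Finset.ne_of_mem_erase (Finset.mem_of_mem_erase ha) rfl
              · exact Finset.disjoint_left.mp hdisj
                  (Finset.mem_of_mem_erase (Finset.mem_of_mem_erase ha)) h
            · rw [hrem's, hclins]
              exact freeMoves _ _ _ _ _ (Finset.erase_subset _ _) rfl hvirt
            · exact hmlt
            · intro hne
              rw [hrem't] at hne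
              exact absurd hne (by simp)
          · -- pairing: Breaker answers in t
            obtain ⟨y, hy⟩ := Finset.nonempty_iff_ne_empty.mpr hret
            have hy' : y ∈ rem.erase x := (Finset.mem_inter.mp hy).1
            have hyt : y ∈ t := (Finset.mem_inter.mp hy).2
            have hyr : y ∈ rem := Finset.mem_of_mem_erase hy'
            have hyx : y ≠ x := Finset.ne_of_mem_erase hy'
            have hync : y ∉ claimed := Finset.disjoint_left.mp hdisj hyr
            have hyns : y ∉ s := fun h => Finset.disjoint_left.mp hst h hyt
            refine ⟨y, hy', ?_⟩
            set rem' := (rem.erase x).erase y with hrem'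
            have hc' : rem'.card = k' := by
              rw [hrem', Finset.card_erase_of_mem hy', hkx]; omega
            have hxnrs : x ∉ rem ∩ s := fun h => hxs (Finset.mem_inter.mp h).2
            have hynrs : y ∉ rem ∩ s := fun h => hyns (Finset.mem_inter.mp h).2
            have hrem's : rem' ∩ s = rem ∩ s := by
              rw [hrem', Finset.erase_inter, Finset.erase_inter,
                Finset.erase_eq_of_notMem hxnrs, Finset.erase_eq_of_notMem hynrs]
            rw [← hc']
            refine ihn rem'.card (by omega) rem' (insert x claimed) rfl
              (fun a ha => hrsub (Finset.mem_of_mem_erase (Finset.mem_of_mem_erase ha)))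
              ?_ ?_ ?_ ?_
            · refine Finset.disjoint_left.mpr fun a ha hac => ?_
              rcases Finset.mem_insert.mp hac with rfl | h
              · exact Finset.ne_of_mem_erase (Finset.mem_of_mem_erase ha) rfl
              · exact Finset.disjoint_left.mp hdisj
                  (Finset.mem_of_mem_erase (Finset.mem_of_mem_erase ha)) h
            · rw [hrem's, hclins]
              exact hvirt
            · exact hmlt
            · intro _
              rw [hmcard]
              have hsub2 : insert y ((t \ rem) \ claimed) ⊆ (t \ rem') \ (insert x claimed) := by
                intro a ha
                rcases Finset.mem_insert.mp ha with rfl | h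
                · refine Finset.mem_sdiff.mpr ⟨Finset.mem_sdiff.mpr
                    ⟨hyt, Finset.notMem_erase _ _⟩, ?_⟩
                  intro hac
                  rcases Finset.mem_insert.mp hac with h1 | h1
                  · exact hyx h1
                  · exact hync h1
                · have h1 := Finset.mem_sdiff.mp h
                  have h2 := Finset.mem_sdiff.mp h1.1
                  refine Finset.mem_sdiff.mpr ⟨Finset.mem_sdiff.mpr ⟨h2.1, fun har =>
                    h2.2 (Finset.mem_of_mem_erase (Finset.mem_of_mem_erase har))⟩, ?_⟩
                  intro hac
                  rcases Finset.mem_insert.mp hac with rfl | h3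
                  · exact h2.2 hx
                  · exact h1.2 h3
              have hyd : y ∉ (t \ rem) \ claimed := fun h =>
                (Finset.mem_sdiff.mp (Finset.mem_sdiff.mp h).1).2 hyr
              have := Finset.card_le_card hsub2
              rw [Finset.card_insert_of_notMem hyd] at this
              omega

section Graphs

variable {α β : Type*}

lemma isCopy_subset_edgeSet (H : SimpleGraph β) (G : SimpleGraph α) {A : Set (Sym2 α)}
    (h : IsCopy H G A) : A ⊆ G.edgeSet := by
  obtain ⟨f, hadj, rfl⟩ := h
  rintro e ⟨e0, he0, rfl⟩
  revert he0
  induction e0 using Sym2.inductionOn with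
  | hf u w =>
    intro he0
    rw [Sym2.map_pair_eq]
    exact hadj u w he0

lemma copy_through_v [Fintype β] (H : SimpleGraph β) (G : SimpleGraph α) (v : α)
    (A t : Finset (Sym2 α)) (hA : IsCopy H G ↑A)
    (ht2 : ∀ e ∈ A, v ∈ e → e ∈ t)
    (e : Sym2 α) (heA : e ∈ A) (hev : v ∈ e) :
    H.minDegree ≤ (A ∩ t).card := by
  classical
  obtain ⟨f, hadj, himg⟩ := hA
  have heA' : e ∈ Sym2.map f '' H.edgeSet := by
    rw [← himg]; exact heA
  obtain ⟨e0, he0, rfl⟩ := heA'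
  obtain ⟨b, hb, hfb⟩ := Sym2.mem_map.mp hev
  have hmemD : ∀ u ∈ H.neighborFinset b, Sym2.map f s(b, u) ∈ A ∩ t := by
    intro u hu
    have hadjbu : H.Adj b u := (SimpleGraph.mem_neighborFinset _ _ _).mp hu
    have h1 : Sym2.map f s(b, u) ∈ (↑A : Set (Sym2 α)) := by
      rw [himg]
      exact ⟨s(b, u), H.mem_edgeSet.mpr hadjbu, rfl⟩
    have h2 : Sym2.map f s(b, u) ∈ A := h1
    have h3 : v ∈ Sym2.map f s(b, u) := by
      rw [Sym2.map_pair_eq, ← hfb]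
      exact Sym2.mem_mk_left _ _
    exact Finset.mem_inter.mpr ⟨h2, ht2 _ h2 h3⟩
  have hinj : Set.InjOn (fun u => Sym2.map f s(b, u)) ↑(H.neighborFinset b) := by
    intro u hu u' hu' heq
    simp only [Sym2.map_pair_eq] at heq
    rcases Sym2.eq_iff.mp heq with ⟨_, h2⟩ | ⟨h1, h2⟩
    · exact f.injective h2
    · exfalso
      have : H.Adj b u' := (SimpleGraph.mem_neighborFinset _ _ _).mp hu'
      exact this.ne' (f.injective h1.symm)
  calc H.minDegree ≤ H.degree b := H.minDegree_le_degree b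
    _ = (H.neighborFinset b).card := rfl
    _ = ((H.neighborFinset b).image (fun u => Sym2.map f s(b, u))).card :=
        (Finset.card_image_of_injOn hinj).symm
    _ ≤ (A ∩ t).card := Finset.card_le_card (by
        intro a ha
        obtain ⟨u, hu, rfl⟩ := Finset.mem_image.mp ha
        exact hmemD u hu)

lemma copy_avoiding_v [Fintype β] (H : SimpleGraph β) (G : SimpleGraph α) (v : α)
    (hδ : 1 ≤ H.minDegree) {B : Finset (Sym2 α)} (hB : IsCopy H G ↑B)
    (hvB : ∀ e ∈ B, v ∉ e) :
    ∃ A : Finset (Sym2 ↥{u : α | u ≠ v}), IsCopy H (G.induce {u : α | u ≠ v}) ↑A ∧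
      B = A.image (Sym2.map (Subtype.val : ↥{u : α | u ≠ v} → α)) := by
  classical
  obtain ⟨f, hadj, himg⟩ := hB
  have hfv : ∀ b, f b ≠ v := by
    intro b hfb
    have h1 : 1 ≤ H.degree b := hδ.trans (H.minDegree_le_degree b)
    obtain ⟨u, hu⟩ := Finset.card_pos.mp h1
    have hadjbu : H.Adj b u := (SimpleGraph.mem_neighborFinset _ _ _).mp hu
    have h2 : Sym2.map f s(b, u) ∈ (↑B : Set (Sym2 α)) := by
      rw [himg]
      exact ⟨s(b, u), H.mem_edgeSet.mpr hadjbu, rfl⟩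
    refine hvB _ h2 ?_
    rw [Sym2.map_pair_eq, ← hfb]
    exact Sym2.mem_mk_left _ _
  let f' : β ↪ ↥{u : α | u ≠ v} :=
    ⟨fun b => ⟨f b, hfv b⟩, fun a b h => f.injective (congrArg Subtype.val h)⟩
  refine ⟨H.edgeFinset.image (Sym2.map f'), ⟨f', fun u w h => ?_, ?_⟩, ?_⟩
  · exact hadj u w h
  · rw [Finset.coe_image, SimpleGraph.coe_edgeFinset]
  · apply Finset.coe_injective
    rw [Finset.coe_image, Finset.coe_image, SimpleGraph.coe_edgeFinset, Set.image_image]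
    rw [himg]
    apply Set.image_congr
    intro e _
    rw [Sym2.map_map]
    rfl

end Graphs

lemma bwa_irrel {i1 i2 : DecidableEq X} {W : Set (Finset X)} {k : ℕ}
    {rem claimed : Finset X} {b : Bool}
    (h : @BreakerWinsAux X i1 W k rem claimed b) :
    @BreakerWinsAux X i2 W k rem claimed b := by
  have hi : i1 = i2 := by
    funext a b'
    exact Subsingleton.elim _ _
  exact hi ▸ h

/-- If `v` is a vertex of `G` with `deg_G(v) ≤ 2(δ(H) - 1)` and
Breaker wins the `H`-game on `G - v` (Maker moving first), then Breaker wins the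
`H`-game on `G` (Maker moving first). -/
theorem breaker_wins_of_low_degree_vertex {α β : Type*} [Fintype α] [Fintype β]
    (G : SimpleGraph α) (H : SimpleGraph β) (v : α)
    (hdeg : (G.degree v : ℤ) ≤ 2 * ((H.minDegree : ℤ) - 1))
    (hB : BreakerWinsHGame H (G.induce {u : α | u ≠ v})) :
    BreakerWinsHGame H G := by
  classical
  set δ := H.minDegree with hδdef
  set board := G.edgeSet.toFinset with hboard
  set t := board.filter (fun e => v ∈ e) with htdef
  set s := board.filter (fun e => v ∉ e) with hsdef
  have hmemboard : ∀ e, e ∈ board ↔ e ∈ G.edgeSet := fun e => Set.mem_toFinset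
  have htinc : t = G.incidenceFinset v := by
    ext e
    simp only [htdef, Finset.mem_filter, SimpleGraph.mem_incidenceFinset,
      SimpleGraph.incidenceSet, Set.mem_sep_iff, hmemboard]
  have htcard : t.card = G.degree v := by
    rw [htinc, SimpleGraph.card_incidenceFinset_eq_degree]
  have hδ1 : 1 ≤ δ := by omega
  have htbound : t.card + 2 ≤ 2 * δ := by omega
  have hst : Disjoint s t := Finset.disjoint_left.mpr fun e he het =>
    (Finset.mem_filter.mp he).2 (Finset.mem_filter.mp het).2
  have hunion : s ∪ t = board := by
    rw [hsdef, htdef, Finset.union_comm]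
    exact Finset.filter_union_filter_not_eq _ board
  have hW1 : ∀ A ∈ copyFinsets H G, A ⊆ s ∪ t ∧ (A ∩ t = ∅ ∨ δ ≤ (A ∩ t).card) := by
    intro A hA
    have hA' : IsCopy H G ↑A := hA
    have hAb : ∀ e ∈ A, e ∈ board := fun e he =>
      (hmemboard e).mpr (isCopy_subset_edgeSet H G hA' he)
    refine ⟨fun e he => hunion ▸ hAb e he, ?_⟩
    by_cases hAt : A ∩ t = ∅
    · exact Or.inl hAt
    · obtain ⟨e, he⟩ := Finset.nonempty_iff_ne_empty.mpr hAt
      exact Or.inr (copy_through_v H G v A t hA'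
        (fun e' he' hv' => Finset.mem_filter.mpr ⟨hAb e' he', hv'⟩)
        e (Finset.mem_inter.mp he).1
        (Finset.mem_filter.mp (Finset.mem_inter.mp he).2).2)
  -- transfer Breaker's strategy from `G - v`
  set G' := G.induce {u : α | u ≠ v} with hG'
  set g : Sym2 ↥{u : α | u ≠ v} → Sym2 α := Sym2.map (Subtype.val) with hgdef
  have hginj : Function.Injective g := Sym2.map.injective Subtype.val_injective
  have himgboard : (G'.edgeSet.toFinset).image g = s := by
    ext e
    simp only [Finset.mem_image, Set.mem_toFinset]
    constructor
    · rintro ⟨e', he', rfl⟩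
      revert he'
      induction e' using Sym2.inductionOn with
      | hf a b =>
        intro he'
        have hadj : G.Adj ↑a ↑b := he'
        refine Finset.mem_filter.mpr ⟨(hmemboard _).mpr ?_, ?_⟩
        · rw [hgdef, Sym2.map_pair_eq]
          exact G.mem_edgeSet.mpr hadj
        · rw [hgdef, Sym2.map_pair_eq]
          intro hv
          rcases Sym2.mem_iff.mp hv with h | h
          · exact a.2 h.symm
          · exact b.2 h.symm
    · intro he
      have he1 : e ∈ board := (Finset.mem_filter.mp he).1
      have he2 : v ∉ e := (Finset.mem_filter.mp he).2
      revert he1 he2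
      induction e using Sym2.inductionOn with
      | hf a b =>
        intro he1 he2
        have hadj : G.Adj a b := G.mem_edgeSet.mp ((hmemboard _).mp he1)
        have hav : a ≠ v := fun h => he2 (h ▸ Sym2.mem_mk_left a b)
        have hbv : b ≠ v := fun h => he2 (h ▸ Sym2.mem_mk_right a b)
        refine ⟨s(⟨a, hav⟩, ⟨b, hbv⟩), ?_, ?_⟩
        · exact G'.mem_edgeSet.mpr hadj
        · rw [hgdef, Sym2.map_pair_eq]
  have hcorr : ∀ B ∈ {A : Finset (Sym2 α) | A ∈ copyFinsets H G ∧ A ∩ t = ∅},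
      ∃ A ∈ copyFinsets H G', B = A.image g := by
    intro B hBm
    obtain ⟨hBc, hBt⟩ := hBm
    have hBc' : IsCopy H G ↑B := hBc
    have hvB : ∀ e ∈ B, v ∉ e := by
      intro e he hv
      have heb : e ∈ board := (hmemboard e).mpr (isCopy_subset_edgeSet H G hBc' he)
      have hmem : e ∈ B ∩ t := Finset.mem_inter.mpr ⟨he, Finset.mem_filter.mpr ⟨heb, hv⟩⟩
      rw [hBt] at hmem
      exact Finset.notMem_empty e hmem
    obtain ⟨A, hA1, hA2⟩ := copy_avoiding_v H G v hδ1 hBc' hvB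
    exact ⟨A, hA1, hA2⟩
  unfold BreakerWinsHGame BreakerWins at hB
  have hvirt0 := relabelGame g hginj _ hcorr _ _ _ true (bwa_irrel hB)
  have hvirt0 : BreakerWinsAux {A | A ∈ copyFinsets H G ∧ A ∩ t = ∅} G'.edgeSet.toFinset.card
      (Finset.image g G'.edgeSet.toFinset) (Finset.image g ∅) true := by convert hvirt0
  rw [himgboard, Finset.image_empty] at hvirt0
  have hcards : G'.edgeSet.toFinset.card = s.card := by
    rw [← himgboard, Finset.card_image_of_injective _ hginj]
  rw [hcards] at hvirt0
  have hbs : board ∩ s = s := Finset.inter_eq_right.mpr (Finset.filter_subset _ _)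
  unfold BreakerWinsHGame BreakerWins
  refine simGame s t hst δ htbound hW1 board.card board ∅ rfl
    (by rw [hunion]) (Finset.disjoint_empty_right _) ?_ ?_ ?_
  · rw [hbs, Finset.empty_inter]
    exact bwa_irrel hvirt0
  · simp only [Finset.inter_empty, Finset.empty_inter, Finset.card_empty]; omega
  · intro _
    simp

end HGamePaper
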